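/- Let p, q, β, σ, λ, ψ, ψ_x ∈ ℝ with σλ ≠ 0. Define K := [[p, 1−p],[1−q, q]], Q := I₂ − K − β(I₂ − K)K − λσK, ψ* := p + q − 1 − (2 − p − q)(1 − (p + q − 1)β)/(σλ), M := ψ I₂ − (ψ_x/λ)(I₂ − βK), and A₁ := Q + λσM, A₂ := Q + λσM e₂e₂ᵀ, A₃ := Q + λσM e₁e₁ᵀ, A₄ := Q. Then: det A₁ = σ²λ²(ψ − 1 + ((β−1)/λ)ψ_x)(ψ − ψ* − ψ_x(1 + β(1−p−q))/λ); det A₂ = −σ²λ²ψ*(ψ − 1 + ((β−1)/λ)ψ_x) + σ(1−q)[σλβψ_x + λ(β(p+q−1) − 1 − σλ)(((β−1)/λ)ψ_x + ψ)]; det A₃ = −σ²λ²(ψ − ψ* − ψ_x(1 + β(1−p−q))/λ) − σ(1−q)[(1 − (p+q)β + σλ − β²(1−p−q))ψ_x − λψ(1 + σλ + β(1−p−q))]; and det A₄ = σ²λ²ψ*. -/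

import Mathlib

/-!
The Markov matrix `K` has trace `1 + ρ` and determinant `ρ`, where `ρ = p + q - 1`, so
Cayley–Hamilton gives `(1 - K) K = ρ (1 - K)`. Hence `Q` and `λσ M` are both of the form
`x • 1 + y • K`, and such a matrix has determinant `(x + y)(x + ρ y)`, the product of its values
at the eigenvalues `1` and `ρ` of `K`; this gives `det A₁` and `det A₄`. The matrices `A₂` and
`A₃` differ from `Q` in a single column, so their determinants are `det Q` plus one minor.
-/

open Matrix

section

variable {R : Type*} [CommRing R]

theorem det_fin_two_smul_one_add_smul (K : Matrix (Fin 2) (Fin 2) R) (x y : R) :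
    (x • (1 : Matrix (Fin 2) (Fin 2) R) + y • K).det
      = x ^ 2 + x * y * K.trace + y ^ 2 * K.det := by
  simp [det_fin_two, trace_fin_two]
  ring

theorem det_fin_two_add_mul_diag_zero_one (A B : Matrix (Fin 2) (Fin 2) R) :
    (A + B * !![0, 0; 0, 1]).det = A.det + (A 0 0 * B 1 1 - A 1 0 * B 0 1) := by
  simp [det_fin_two, Matrix.mul_apply, Fin.sum_univ_two]
  ring

theorem det_fin_two_add_mul_diag_one_zero (A B : Matrix (Fin 2) (Fin 2) R) :
    (A + B * !![1, 0; 0, 0]).det = A.det + (B 0 0 * A 1 1 - B 1 0 * A 0 1) := by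
  simp [det_fin_two, Matrix.mul_apply, Fin.sum_univ_two]
  ring

def markovMatrix (p q : R) : Matrix (Fin 2) (Fin 2) R := !![p, 1 - p; 1 - q, q]

theorem trace_markovMatrix (p q : R) : (markovMatrix p q).trace = p + q := by
  simp [markovMatrix, trace_fin_two]

theorem det_markovMatrix (p q : R) : (markovMatrix p q).det = p + q - 1 := by
  simp [markovMatrix, det_fin_two]
  ring

theorem one_sub_markovMatrix_mul_self (p q : R) :
    (1 - markovMatrix p q) * markovMatrix p q = (p + q - 1) • (1 - markovMatrix p q) := by
  ext i j
  fin_cases i <;> fin_cases j <;> simp [markovMatrix, Matrix.mul_apply, Fin.sum_univ_two] <;> ring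

theorem det_smul_one_add_smul_markovMatrix (p q x y : R) :
    (x • (1 : Matrix (Fin 2) (Fin 2) R) + y • markovMatrix p q).det
      = (x + y) * (x + (p + q - 1) * y) := by
  rw [det_fin_two_smul_one_add_smul, trace_markovMatrix, det_markovMatrix]
  ring

theorem smul_one_add_smul_markovMatrix (p q x y : R) :
    x • (1 : Matrix (Fin 2) (Fin 2) R) + y • markovMatrix p q
      = !![x + y * p, y * (1 - p); y * (1 - q), x + y * q] := by
  ext i j
  fin_cases i <;> fin_cases j <;> simp [markovMatrix]

end

/-- Closed-form determinant identities for the four regime-configuration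
coefficient matrices of the piecewise linear MSV system of the three-equation
New Keynesian model with Taylor rule `R̂_t = max{−μ, ψπ̂_t + ψ_x x̂_t}` and a
two-state Markov demand shock. -/
theorem nk_det_identities (p q β σ lam ψ ψx : ℝ) (h : σ * lam ≠ 0) :
    (let K : Matrix (Fin 2) (Fin 2) ℝ := !![p, 1 - p; 1 - q, q]
     let Q : Matrix (Fin 2) (Fin 2) ℝ := 1 - K - β • ((1 - K) * K) - (lam * σ) • K
     let ψs : ℝ := p + q - 1 - (2 - p - q) * (1 - (p + q - 1) * β) / (σ * lam)
     let M : Matrix (Fin 2) (Fin 2) ℝ :=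
       ψ • (1 : Matrix (Fin 2) (Fin 2) ℝ)
         - (ψx / lam) • ((1 : Matrix (Fin 2) (Fin 2) ℝ) - β • K)
     let A₁ : Matrix (Fin 2) (Fin 2) ℝ := Q + (lam * σ) • M
     let A₂ : Matrix (Fin 2) (Fin 2) ℝ := Q + (lam * σ) • (M * !![(0:ℝ), 0; 0, 1])
     let A₃ : Matrix (Fin 2) (Fin 2) ℝ := Q + (lam * σ) • (M * !![(1:ℝ), 0; 0, 0])
     let A₄ : Matrix (Fin 2) (Fin 2) ℝ := Q
     A₁.det = σ ^ 2 * lam ^ 2 * (ψ - 1 + ((β - 1) / lam) * ψx)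
                * (ψ - ψs - ψx * (1 + β * (1 - p - q)) / lam) ∧
     A₂.det = -(σ ^ 2 * lam ^ 2) * ψs * (ψ - 1 + ((β - 1) / lam) * ψx)
                + σ * (1 - q) * (σ * lam * β * ψx
                    + lam * (β * (p + q - 1) - 1 - σ * lam)
                        * (((β - 1) / lam) * ψx + ψ)) ∧
     A₃.det = -(σ ^ 2 * lam ^ 2) * (ψ - ψs - ψx * (1 + β * (1 - p - q)) / lam)
                - σ * (1 - q) * ((1 - (p + q) * β + σ * lam
                      - β ^ 2 * (1 - p - q)) * ψx
                    - lam * ψ * (1 + σ * lam + β * (1 - p - q))) ∧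
     A₄.det = σ ^ 2 * lam ^ 2 * ψs) := by
  intro K Q ψs M A₁ A₂ A₃ A₄
  have hσ : σ ≠ 0 := left_ne_zero_of_mul h
  have hlam : lam ≠ 0 := right_ne_zero_of_mul h
  have hK : K = markovMatrix p q := rfl
  have hQ : Q = (1 - β * (p + q - 1)) • 1 + (-(1 - β * (p + q - 1) + lam * σ)) • K := by
    simp only [Q, hK, one_sub_markovMatrix_mul_self]
    module
  have hM : (lam * σ) • M
      = (lam * σ * (ψ - ψx / lam)) • 1 + (lam * σ * (β * ψx / lam)) • K := by
    simp only [M]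
    module
  have hA₁ : A₁ = (1 - β * (p + q - 1) + lam * σ * (ψ - ψx / lam)) • 1
      + (lam * σ * (β * ψx / lam) - (1 - β * (p + q - 1) + lam * σ)) • K := by
    simp only [A₁, hQ, hM]
    module
  have hA₂ : A₂ = Q + ((lam * σ) • M) * !![0, 0; 0, 1] := by simp only [A₂, smul_mul_assoc]
  have hA₃ : A₃ = Q + ((lam * σ) • M) * !![1, 0; 0, 0] := by simp only [A₃, smul_mul_assoc]
  simp only [hA₁, hA₂, hA₃, A₄, det_fin_two_add_mul_diag_zero_one,
    det_fin_two_add_mul_diag_one_zero, hM, hQ, hK, det_smul_one_add_smul_markovMatrix]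
  simp only [smul_one_add_smul_markovMatrix, of_apply, cons_val', cons_val_zero, cons_val_one,
    empty_val', cons_val_fin_one, ψs]
  refine ⟨?_, ?_, ?_, ?_⟩ <;> field_simp <;> ring
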